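/- Let k be an even integer with 0 ≤ k ≤ ⌊D/2⌋ and let k' be an even integer with 2 ≤ k' ≤ ⌈D/2⌉, and suppose ⌊D/2⌋ − k = ⌈D/2⌉ − k' (so the matrices below have equal size d+1 with d = ⌊D/2⌋ − k). Then there is no invertible complex (d+1)×(d+1) matrix P such that P·[A]_k·P⁻¹ = ⟨A⟩_{k'} and P·[A*]_k·P⁻¹ = ⟨A*⟩_{k'}. -/
import Mathlib


open Matrix

/-- The tridiagonal matrix `[A]_k` of size `d+1` (here `d = ⌊D/2⌋ − k`): diagonal entries
`αᵢ = 2i(D−2i−2k)−k`, entries `βᵢ = (i+1)(2i+1)` in position `(i+1, i)`, and entries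
`γᵢ = (D−2i−2k+1)(D−2i−2k+2)/2` in position `(i−1, i)`. -/
noncomputable def evenA (D k d : ℕ) : Matrix (Fin (d + 1)) (Fin (d + 1)) ℂ :=
  fun i j =>
    if (i : ℕ) = (j : ℕ) then 2 * (i : ℂ) * ((D : ℂ) - 2 * i - 2 * k) - k
    else if (i : ℕ) = (j : ℕ) + 1 then ((j : ℂ) + 1) * (2 * j + 1)
    else if (j : ℕ) = (i : ℕ) + 1 then
      (((D : ℂ) - 2 * j - 2 * k + 1) * ((D : ℂ) - 2 * j - 2 * k + 2)) / 2
    else 0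

/-- The diagonal matrix `[A*]_k` of size `d+1` with entries `θᵢ* = D − 2(2i+k)`. -/
noncomputable def evenAstar (D k d : ℕ) : Matrix (Fin (d + 1)) (Fin (d + 1)) ℂ :=
  Matrix.diagonal fun i => (D : ℂ) - 2 * (2 * (i : ℂ) + k)

/-- The tridiagonal matrix `⟨A⟩_k` of size `d+1` (here `d = ⌈D/2⌉ − k`): diagonal entries
`α'ᵢ = (2i+1)(D−2i−2k+1)−k+1`, entries `β'ᵢ = (i+1)(2i+3)` in position `(i+1, i)`, and
entries `γ'ᵢ = (D−2i−2k+2)(D−2i−2k+3)/2` in position `(i−1, i)`. -/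
noncomputable def oddA (D k d : ℕ) : Matrix (Fin (d + 1)) (Fin (d + 1)) ℂ :=
  fun i j =>
    if (i : ℕ) = (j : ℕ) then (2 * (i : ℂ) + 1) * ((D : ℂ) - 2 * i - 2 * k + 1) - k + 1
    else if (i : ℕ) = (j : ℕ) + 1 then ((j : ℂ) + 1) * (2 * j + 3)
    else if (j : ℕ) = (i : ℕ) + 1 then
      (((D : ℂ) - 2 * j - 2 * k + 2) * ((D : ℂ) - 2 * j - 2 * k + 3)) / 2
    else 0

/-- The diagonal matrix `⟨A*⟩_k` of size `d+1` with entries `θᵢ* = D − 2(2i+k)`. -/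
noncomputable def oddAstar (D k d : ℕ) : Matrix (Fin (d + 1)) (Fin (d + 1)) ℂ :=
  Matrix.diagonal fun i => (D : ℂ) - 2 * (2 * (i : ℂ) + k)

theorem stmt4 (D k k' d : ℕ) (hD : 3 ≤ D)
    (hk : Even k) (hkD : k ≤ D / 2)
    (hk' : Even k') (hk'2 : 2 ≤ k') (hk'D : k' ≤ (D + 1) / 2)
    (hd : d = D / 2 - k) (hd' : d = (D + 1) / 2 - k') :
    ¬ ∃ P : Matrix (Fin (d + 1)) (Fin (d + 1)) ℂ, IsUnit P ∧
        P * evenA D k d * P⁻¹ = oddA D k' d ∧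
        P * evenAstar D k d * P⁻¹ = oddAstar D k' d := by
  rintro ⟨P, hP, hA, -⟩
  have hke := Nat.even_iff.mp hk
  have hk'e := Nat.even_iff.mp hk'
  have hkk' : k' = k := by omega
  have h2k : 2 * k' ≤ D := by omega
  subst hkk'
  have hPdet : IsUnit P.det := (Matrix.isUnit_iff_isUnit_det P).mp hP
  have hinv : P⁻¹ * P = 1 := Matrix.nonsing_inv_mul P hPdet
  have htr : Matrix.trace (oddA D k' d) = Matrix.trace (evenA D k' d) := by
    rw [← hA, Matrix.trace_mul_cycle, hinv, one_mul]
  have hdiag : ∀ i : Fin (d + 1),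
      oddA D k' d i i - evenA D k' d i i = (D : ℂ) - 2 * k' + 2 := by
    intro i
    simp only [oddA, evenA]
    simp only [if_true]
    ring
  have hsum : Matrix.trace (oddA D k' d) - Matrix.trace (evenA D k' d)
      = (d + 1 : ℕ) * ((D : ℂ) - 2 * k' + 2) := by
    rw [Matrix.trace, Matrix.trace, ← Finset.sum_sub_distrib]
    simp only [Matrix.diag]
    rw [Finset.sum_congr rfl fun i _ => hdiag i, Finset.sum_const,
      Finset.card_univ, Fintype.card_fin, nsmul_eq_mul]
  rw [htr, sub_self] at hsum
  have hne : ((d + 1 : ℕ) : ℂ) * ((D : ℂ) - 2 * k' + 2) ≠ 0 := by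
    apply mul_ne_zero
    · exact_mod_cast Nat.succ_ne_zero d
    · have h : ((D : ℂ) - 2 * k' + 2) = ((D - 2 * k' + 2 : ℕ) : ℂ) := by
        push_cast [h2k]; ring
      rw [h]
      exact_mod_cast Nat.succ_ne_zero (D - 2 * k' + 1)
  exact hne hsum.symm
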